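/- For every infinite burger stack s, every integer n ≥ 1, and every integer m ≥ 1, the events {the top burger of s is a cheeseburger} ∩ {T > m², |J_T| = n} ∩ E and E*_n ∩ {T*_{θ0,n} > m²} coincide (they are the same subset of the sample space of the i.i.d. sequence (X_i)_{i≥1} under P^{0,s}). -/

import Mathlib

open MeasureTheory ProbabilityTheory
open scoped ENNReal ENat

namespace FKPaper

/-- The alphabet `Θ = {h, c, H, C, F}`: `pH`/`pC` are hamburger/cheeseburger productions,
`oH`/`oC`/`oF` are the orders `H`, `C`, `F`. -/
inductive Sym : Type
  | pH | pC | oH | oC | oF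
  deriving DecidableEq

instance : Fintype Sym :=
  ⟨{Sym.pH, Sym.pC, Sym.oH, Sym.oC, Sym.oF}, by intro x; cases x <;> simp⟩

instance : MeasurableSpace Sym := ⊤

/-- The single-symbol law `μ_p`: `muP p a` is the probability of symbol `a`. -/
noncomputable def muP (p : ℝ) : Sym → ℝ≥0∞
  | Sym.pH => ENNReal.ofReal (1/4)
  | Sym.pC => ENNReal.ofReal (1/4)
  | Sym.oH => ENNReal.ofReal ((1-p)/4)
  | Sym.oC => ENNReal.ofReal ((1-p)/4)
  | Sym.oF => ENNReal.ofReal (p/2)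

/-- Type of a stack element: `inl j` is the burger at depth `j` of the initial infinite
stack `s` (read downward from the top), `inr i` is the burger produced at time `i`;
`true` means hamburger, `false` means cheeseburger. -/
def symType (s : ℕ → Bool) (x : ℕ → Sym) : ℕ ⊕ ℕ → Bool
  | Sum.inl j => s j
  | Sum.inr i => decide (x i = Sym.pH)

/-- Push a newly produced burger (produced at time `i`) on top of the stack. -/
def push (st : ℕ → ℕ ⊕ ℕ) (i : ℕ) : ℕ → ℕ ⊕ ℕ
  | 0 => Sum.inr i
  | n+1 => st n

/-- Remove the element at depth `m` of the stack. -/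
def del (st : ℕ → ℕ ⊕ ℕ) (m : ℕ) : ℕ → ℕ ⊕ ℕ :=
  fun n => if n < m then st n else st (n+1)

open Classical in
/-- One step of the LIFO stack dynamics: reading symbol `x i`, return the new stack and
the element consumed (if any).  An `H` (resp. `C`) order consumes the topmost hamburger
(resp. cheeseburger); an `F` order consumes the topmost burger. -/
noncomputable def stackStep (s : ℕ → Bool) (x : ℕ → Sym) (st : ℕ → ℕ ⊕ ℕ) (i : ℕ) :
    (ℕ → ℕ ⊕ ℕ) × Option (ℕ ⊕ ℕ) :=
  match x i with
  | Sym.pH => (push st i, none)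
  | Sym.pC => (push st i, none)
  | Sym.oF => (del st 0, some (st 0))
  | Sym.oH =>
      if h : ∃ m, symType s x (st m) = true then
        (del st (Nat.find h), some (st (Nat.find h)))
      else (st, none)
  | Sym.oC =>
      if h : ∃ m, symType s x (st m) = false then
        (del st (Nat.find h), some (st (Nat.find h)))
      else (st, none)

/-- The stack after reading `X_1, …, X_k`; initially the stack is `s` itself. -/
noncomputable def stackAt (s : ℕ → Bool) (x : ℕ → Sym) : ℕ → (ℕ → ℕ ⊕ ℕ)
  | 0 => fun j => Sum.inl j
  | k+1 => (stackStep s x (stackAt s x k) (k+1)).1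

/-- The stack element consumed at time `k` (if any). -/
noncomputable def eatenAt (s : ℕ → Bool) (x : ℕ → Sym) : ℕ → Option (ℕ ⊕ ℕ)
  | 0 => none
  | k+1 => (stackStep s x (stackAt s x k) (k+1)).2

open Classical in
/-- `T`: the first time at which the top burger of `s` is consumed (`⊤` if never). -/
noncomputable def hitT (s : ℕ → Bool) (x : ℕ → Sym) : ℕ∞ :=
  if h : ∃ k, eatenAt s x k = some (Sum.inl 0) then ((Nat.find h : ℕ) : ℕ∞) else ⊤

/-- `E`: the event that the top burger of `s` is consumed by an `F` order. -/
def Eev (s : ℕ → Bool) (x : ℕ → Sym) : Prop :=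
  ∃ k, eatenAt s x k = some (Sum.inl 0) ∧ x k = Sym.oF

open Classical in
/-- `|J_T|`: the number of orders among `X_1, …, X_T` whose match lies in `s` strictly
below its top burger. -/
noncomputable def JT (s : ℕ → Bool) (x : ℕ → Sym) : ℕ :=
  if h : ∃ k, eatenAt s x k = some (Sum.inl 0) then
    ((Finset.Icc 1 (Nat.find h)).filter
      (fun k => ∃ j, 1 ≤ j ∧ eatenAt s x k = some (Sum.inl j))).card
  else 0

/-- `θ0 = 2 arctan (1/√(1-2p))`. -/
noncomputable def theta0 (p : ℝ) : ℝ := 2 * Real.arctan (1 / Real.sqrt (1 - 2*p))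

/-- `p0 = π/(2 θ0)`. -/
noncomputable def pZero (p : ℝ) : ℝ := Real.pi / (2 * theta0 p)

end FKPaper

namespace FKPaper

/-- Increment of the burger-count walk `U` at time `i`: `(+1,0)` for a `c` production,
`(-1,0)` if the symbol consumes a cheeseburger, `(0,+1)` for an `h` production,
`(0,-1)` if the symbol consumes a hamburger. -/
noncomputable def Uinc (s : ℕ → Bool) (x : ℕ → Sym) (i : ℕ) : ℤ × ℤ :=
  if x i = Sym.pC then (1, 0)
  else if x i = Sym.pH then (0, 1)
  else
    match eatenAt s x i with
    | some e => if symType s x e then (0, -1) else (-1, 0)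
    | none => (0, 0)

/-- The walk `U_k ∈ ℤ²`, `U_0 = (0,0)`. -/
noncomputable def Uwalk (s : ℕ → Bool) (x : ℕ → Sym) : ℕ → ℤ × ℤ
  | 0 => (0, 0)
  | k+1 => Uwalk s x k + Uinc s x (k+1)

/-- `σ = √((1-p)/2)`. -/
noncomputable def sigmaP (p : ℝ) : ℝ := Real.sqrt ((1-p)/2)

/-- The linear map `Λ` with matrix `(1/σ)·[[1, cos θ0],[0, sin θ0]]`, viewed as a map
`ℤ² → ℂ ≅ ℝ²`. -/
noncomputable def Lam (p : ℝ) (u : ℤ × ℤ) : ℂ :=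
  ((((u.1 : ℝ) + (u.2 : ℝ) * Real.cos (theta0 p)) / sigmaP p : ℝ) : ℂ)
    + ((((u.2 : ℝ) * Real.sin (theta0 p)) / sigmaP p : ℝ) : ℂ) * Complex.I

/-- The walk `V_k = Λ(U_k)`, started at the origin. -/
noncomputable def Vwalk (p : ℝ) (s : ℕ → Bool) (x : ℕ → Sym) (k : ℕ) : ℂ :=
  Lam p (Uwalk s x k)

/-- `v0 = Λ(0,1)`. -/
noncomputable def vZero (p : ℝ) : ℂ := Lam p (0, 1)

/-- The cone `C(θ) = {z : z = 0 or arg z ∈ [0,θ]}`. -/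
def coneC (θ : ℝ) : Set ℂ := {z | z = 0 ∨ (0 ≤ z.arg ∧ z.arg ≤ θ)}

/-- The translated cone `C_n(θ0) = C(θ0) - n·v0`. -/
def coneCn (p : ℝ) (n : ℕ) : Set ℂ := {z | z + (n : ℂ) * vZero p ∈ coneC (theta0 p)}

open Classical in
/-- `T*_{θ0,n}`: the first time `k ≥ 1` at which `V_k ∉ C_n(θ0)` (`⊤` if never). -/
noncomputable def TstarN (p : ℝ) (s : ℕ → Bool) (x : ℕ → Sym) (n : ℕ) : ℕ∞ :=
  if h : ∃ k, 1 ≤ k ∧ Vwalk p s x k ∉ coneCn p n then ((Nat.find h : ℕ) : ℕ∞) else ⊤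

/-- `E*_n`: the top burger of `s` is a cheeseburger, the walk leaves `C_n(θ0)` for the
first time (at time `T*_{θ0,n}`) from the tip `-n·v0`, and the symbol read at that time
is an `F`. -/
def EstarN (p : ℝ) (s : ℕ → Bool) (x : ℕ → Sym) (n : ℕ) : Prop :=
  s 0 = false ∧
  ∃ k, 1 ≤ k ∧ Vwalk p s x k ∉ coneCn p n ∧
    (∀ j, 1 ≤ j → j < k → Vwalk p s x j ∈ coneCn p n) ∧
    Vwalk p s x (k-1) = -((n : ℂ) * vZero p) ∧ x k = Sym.oF

open Classical in
/-- `T⁺_r`: the first time `k ≥ 1` with `|V_k| ≥ r` (`⊤` if never). -/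
noncomputable def Tplus (p : ℝ) (s : ℕ → Bool) (x : ℕ → Sym) (r : ℝ) : ℕ∞ :=
  if h : ∃ k, 1 ≤ k ∧ r ≤ ‖Vwalk p s x k‖ then ((Nat.find h : ℕ) : ℕ∞) else ⊤

end FKPaper


/-!
Until the top cheeseburger `inl 0` of `s` is eaten, the only orders that eat a burger of `s`
are `H` orders finding no hamburger above `inl 0`, and these are exactly the orders counted by
`|J|`. So at such times `U = (#c, #h - |J|)`, where `#c`, `#h` count the produced burgers still
on the stack, and at each `J`-order `#h = 0`, i.e. `U₂ = -|J|`. The top burger is eaten when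
`U₁` first becomes `-1`, and it is eaten by an `F` exactly when nothing lies above it, i.e. when
`U = (0, -|J|)` just before. Since `Λ` maps the quadrant `{u₁ ≥ 0, u₂ ≥ -n}` onto `C_n(θ₀)` and
`(0, -n)` to its tip `-n v₀`, both events say that `U` stays in this quadrant before time
`T = T*_{θ₀,n}`, is at its corner `(0, -n)` at time `T - 1`, and leaves it by an `F`.
-/

namespace FKPaper

section Geometry

open Real

variable {p : ℝ}

lemma sigmaP_pos (hp : p ∈ Set.Ioo (0:ℝ) (1/2)) : 0 < sigmaP p :=
  Real.sqrt_pos.mpr (by linarith [hp.2])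

lemma theta0_pos (hp : p ∈ Set.Ioo (0:ℝ) (1/2)) : 0 < theta0 p := by
  have : 0 < Real.sqrt (1 - 2*p) := Real.sqrt_pos.mpr (by linarith [hp.2])
  unfold theta0
  have := arctan_pos.mpr (one_div_pos.mpr this)
  linarith

lemma theta0_lt_pi (p : ℝ) : theta0 p < π := by
  unfold theta0
  linarith [arctan_lt_pi_div_two (1 / Real.sqrt (1 - 2*p))]

lemma mem_coneC_iff {θ : ℝ} (hθ : 0 < θ) (hθπ : θ < π) (z : ℂ) :
    z ∈ coneC θ ↔ 0 ≤ z.im ∧ 0 ≤ z.re * sin θ - z.im * cos θ := by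
  rcases eq_or_ne z 0 with rfl | hz
  · simp [coneC]
  have hnorm : 0 < ‖z‖ := norm_pos_iff.mpr hz
  have key : z.re * sin θ - z.im * cos θ = ‖z‖ * sin (θ - z.arg) := by
    rw [sin_sub, Complex.cos_arg hz, Complex.sin_arg]
    field_simp
  simp only [coneC, Set.mem_ofPred_eq, hz, false_or, ← Complex.arg_nonneg_iff, key,
    mul_nonneg_iff_of_pos_left hnorm]
  refine and_congr_right fun h0 => ⟨fun h => ?_, fun h => ?_⟩
  · exact sin_nonneg_of_nonneg_of_le_pi (by linarith) (by linarith)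
  · by_contra! hlt
    linarith [sin_neg_of_neg_of_neg_pi_lt (by linarith : θ - z.arg < 0)
      (by linarith [Complex.arg_le_pi z])]

lemma Lam_re (u : ℤ × ℤ) :
    (Lam p u).re = ((u.1 : ℝ) + u.2 * cos (theta0 p)) / sigmaP p := by
  simp only [Lam, Complex.add_re, Complex.ofReal_re, Complex.mul_re, Complex.I_re,
    Complex.I_im, Complex.ofReal_im]
  ring

lemma Lam_im (u : ℤ × ℤ) :
    (Lam p u).im = (u.2 : ℝ) * sin (theta0 p) / sigmaP p := by
  simp only [Lam, Complex.add_im, Complex.ofReal_im, Complex.mul_im, Complex.I_re,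
    Complex.I_im, Complex.ofReal_re]
  ring

lemma Lam_add (u v : ℤ × ℤ) : Lam p (u + v) = Lam p u + Lam p v := by
  apply Complex.ext <;> simp only [Complex.add_re, Complex.add_im, Lam_re, Lam_im,
    Prod.fst_add, Prod.snd_add, Int.cast_add] <;> ring

lemma Lam_zero_mk_eq_mul_vZero (c : ℤ) : Lam p (0, c) = c * vZero p := by
  apply Complex.ext <;> simp [vZero, Lam_re, Lam_im] <;> ring

lemma Lam_mem_coneC_iff (hp : p ∈ Set.Ioo (0:ℝ) (1/2)) (u : ℤ × ℤ) :
    Lam p u ∈ coneC (theta0 p) ↔ 0 ≤ u.1 ∧ 0 ≤ u.2 := by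
  have hc : 0 < sin (theta0 p) / sigmaP p :=
    div_pos (sin_pos_of_pos_of_lt_pi (theta0_pos hp) (theta0_lt_pi p)) (sigmaP_pos hp)
  rw [mem_coneC_iff (theta0_pos hp) (theta0_lt_pi p), Lam_re, Lam_im,
    show ((u.1 : ℝ) + u.2 * cos (theta0 p)) / sigmaP p * sin (theta0 p)
      - u.2 * sin (theta0 p) / sigmaP p * cos (theta0 p)
      = u.1 * (sin (theta0 p) / sigmaP p) by ring,
    mul_div_assoc, mul_nonneg_iff_of_pos_right hc, mul_nonneg_iff_of_pos_right hc, and_comm]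
  norm_cast

lemma Lam_injective (hp : p ∈ Set.Ioo (0:ℝ) (1/2)) : Function.Injective (Lam p) := by
  intro u v h
  have hs : sin (theta0 p) ≠ 0 := (sin_pos_of_pos_of_lt_pi (theta0_pos hp) (theta0_lt_pi p)).ne'
  have hσ := (sigmaP_pos hp).ne'
  have h2 : (u.2 : ℝ) = v.2 := by
    have := congrArg Complex.im h
    rwa [Lam_im, Lam_im, div_left_inj' hσ, mul_left_inj' hs] at this
  have h1 : (u.1 : ℝ) = v.1 := by
    have := congrArg Complex.re h
    rw [Lam_re, Lam_re, div_left_inj' hσ, h2] at this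
    linarith
  exact Prod.ext (by exact_mod_cast h1) (by exact_mod_cast h2)

variable {s : ℕ → Bool} {x : ℕ → Sym}

lemma Vwalk_mem_coneCn_iff (hp : p ∈ Set.Ioo (0:ℝ) (1/2)) (n k : ℕ) :
    Vwalk p s x k ∈ coneCn p n ↔ 0 ≤ (Uwalk s x k).1 ∧ -(n : ℤ) ≤ (Uwalk s x k).2 := by
  change Lam p (Uwalk s x k) + (n : ℂ) * vZero p ∈ coneC (theta0 p) ↔ _
  rw [show ((n : ℂ)) = ((n : ℤ) : ℂ) by simp, ← Lam_zero_mk_eq_mul_vZero, ← Lam_add,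
    Lam_mem_coneC_iff hp]
  simp only [Prod.fst_add, Prod.snd_add, add_zero]
  omega

lemma Vwalk_eq_neg_tip_iff (hp : p ∈ Set.Ioo (0:ℝ) (1/2)) (n k : ℕ) :
    Vwalk p s x k = -((n : ℂ) * vZero p) ↔ Uwalk s x k = (0, -(n : ℤ)) := by
  rw [show -((n : ℂ) * vZero p) = Lam p (0, -(n : ℤ)) by
    rw [Lam_zero_mk_eq_mul_vZero]; push_cast; ring]
  exact (Lam_injective hp).eq_iff

end Geometry

section Dynamics

variable {s : ℕ → Bool} {x : ℕ → Sym}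

def Accepts : Sym → Bool → Prop
  | .oF, _ => True
  | .oH, b => b = true
  | .oC, b => b = false
  | .pH, _ => False
  | .pC, _ => False

lemma Accepts.ne_pH {a : Sym} {b : Bool} (h : Accepts a b) : a ≠ .pH := by
  rintro rfl; exact h

lemma Accepts.ne_pC {a : Sym} {b : Bool} (h : Accepts a b) : a ≠ .pC := by
  rintro rfl; exact h

lemma Accepts.eq_true_of_not_false {a : Sym} {b : Bool} (h : Accepts a b)
    (hf : ¬ Accepts a false) : b = true := by
  cases a <;> cases b <;> simp_all [Accepts]

lemma exists_of_eatenAt_succ_eq_some {k : ℕ} {e : ℕ ⊕ ℕ}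
    (h : eatenAt s x (k+1) = some e) :
    ∃ m, stackAt s x k m = e ∧ Accepts (x (k+1)) (symType s x e) ∧
      (∀ m' < m, ¬ Accepts (x (k+1)) (symType s x (stackAt s x k m'))) ∧
      stackAt s x (k+1) = del (stackAt s x k) m := by
  classical
  rw [eatenAt, stackStep] at h
  rw [stackAt, stackStep]
  cases hx : x (k+1) <;> simp only [hx] at h ⊢
  case pH | pC => simp at h
  case oH | oC =>
    split at h
    next hex =>
      refine ⟨Nat.find hex, Option.some.inj h, ?_, fun m' hm' => Nat.find_min hex hm', ?_⟩
      · rw [← Option.some.inj h]; exact Nat.find_spec hex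
      · rw [dif_pos hex]
    next => simp at h
  case oF => exact ⟨0, Option.some.inj h, trivial, by simp, rfl⟩

lemma eatenAt_succ_eq_none {k : ℕ} (h : eatenAt s x (k+1) = none) :
    ((x (k+1) = .pH ∨ x (k+1) = .pC) ∧ stackAt s x (k+1) = push (stackAt s x k) (k+1)) ∨
      (x (k+1) ≠ .pH ∧ x (k+1) ≠ .pC ∧ stackAt s x (k+1) = stackAt s x k) := by
  classical
  rw [eatenAt, stackStep] at h
  rw [stackAt, stackStep]
  cases hx : x (k+1) <;> simp only [hx] at h ⊢ <;> simp
  case oH | oC =>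
    split at h
    next => simp at h
    next hex => rw [dif_neg hex]
  case oF => simp at h

lemma eatenAt_succ_of_oF {k : ℕ} (h : x (k+1) = .oF) :
    eatenAt s x (k+1) = some (stackAt s x k 0) := by
  rw [eatenAt, stackStep, h]

lemma Uwalk_succ (k : ℕ) : Uwalk s x (k+1) = Uwalk s x k + Uinc s x (k+1) := rfl

def burgerUnit : Bool → ℤ × ℤ
  | true => (0, 1)
  | false => (1, 0)

lemma Uinc_of_production {i : ℕ} (h : x i = .pH ∨ x i = .pC) :
    Uinc s x i = burgerUnit (decide (x i = .pH)) := by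
  rcases h with h | h <;> simp [Uinc, h, burgerUnit]

lemma Uinc_of_eatenAt_eq_some {k : ℕ} {e : ℕ ⊕ ℕ} (h : eatenAt s x (k+1) = some e) :
    Uinc s x (k+1) = -burgerUnit (symType s x e) := by
  obtain ⟨-, -, hacc, -⟩ := exists_of_eatenAt_succ_eq_some h
  cases hb : symType s x e <;> simp [Uinc, hacc.ne_pH, hacc.ne_pC, h, hb, burgerUnit]

lemma Uinc_of_eatenAt_eq_none {i : ℕ} (hH : x i ≠ .pH) (hC : x i ≠ .pC)
    (h : eatenAt s x i = none) : Uinc s x i = 0 := by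
  simp [Uinc, hH, hC, h]

lemma del_push_zero (st : ℕ → ℕ ⊕ ℕ) (i : ℕ) : del (push st i) 0 = st := by
  funext n; simp [del, push]

lemma del_push_succ (st : ℕ → ℕ ⊕ ℕ) (i m : ℕ) :
    del (push st i) (m+1) = push (del st m) i := by
  funext n
  cases n with
  | zero => simp [del, push]
  | succ n => by_cases h : n < m <;> simp [del, push, h]

def pushList (st : ℕ → ℕ ⊕ ℕ) : List ℕ → ℕ → ℕ ⊕ ℕ
  | [] => st
  | i :: P => push (pushList st P) i

lemma pushList_lt (st : ℕ → ℕ ⊕ ℕ) :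
    ∀ (P : List ℕ) (m : ℕ) (hm : m < P.length), pushList st P m = .inr P[m]
  | i :: P, 0, _ => rfl
  | i :: P, m+1, hm => pushList_lt st P m (by simpa using hm)

lemma pushList_length_add (st : ℕ → ℕ ⊕ ℕ) :
    ∀ (P : List ℕ) (m : ℕ), pushList st P (P.length + m) = st m
  | [], m => by simp [pushList]
  | i :: P, m => by
    rw [List.length_cons, Nat.add_right_comm]
    exact pushList_length_add st P m

lemma del_pushList_lt (st : ℕ → ℕ ⊕ ℕ) :
    ∀ (P : List ℕ) (m : ℕ), m < P.length → del (pushList st P) m = pushList st (P.eraseIdx m)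
  | i :: P, 0, _ => del_push_zero _ _
  | i :: P, m+1, hm => by
    rw [pushList, del_push_succ, del_pushList_lt st P m (by simpa using hm)]
    rfl

lemma del_pushList_length_add (st : ℕ → ℕ ⊕ ℕ) :
    ∀ (P : List ℕ) (m : ℕ), del (pushList st P) (P.length + m) = pushList (del st m) P
  | [], m => by simp [pushList]
  | i :: P, m => by
    rw [List.length_cons, Nat.add_right_comm, pushList, del_push_succ,
      del_pushList_length_add st P m]
    rfl

lemma stackAt_succ_ne_inl {k j : ℕ} (h : ∀ m, stackAt s x k m ≠ .inl j) (m : ℕ) :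
    stackAt s x (k+1) m ≠ .inl j := by
  rcases he : eatenAt s x (k+1) with _ | e
  · rcases eatenAt_succ_eq_none he with ⟨-, hst⟩ | ⟨-, -, hst⟩ <;> rw [hst]
    · cases m with
      | zero => simp [push]
      | succ m => exact h m
    · exact h m
  · obtain ⟨a, -, -, -, hst⟩ := exists_of_eatenAt_succ_eq_some he
    rw [hst, del]
    split_ifs
    exacts [h m, h (m+1)]

lemma stackAt_ne_inl_of_le {k l j : ℕ} (hkl : k ≤ l) (h : ∀ m, stackAt s x k m ≠ .inl j) :
    ∀ m, stackAt s x l m ≠ .inl j := by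
  induction l, hkl using Nat.le_induction with
  | base => exact h
  | succ l _ ih => exact stackAt_succ_ne_inl ih

end Dynamics

section Regime

variable {s : ℕ → Bool} {x : ℕ → Sym}

open Classical in
noncomputable def Jcount (s : ℕ → Bool) (x : ℕ → Sym) (k : ℕ) : ℕ :=
  ((Finset.Icc 1 k).filter fun t => ∃ j, 1 ≤ j ∧ eatenAt s x t = some (Sum.inl j)).card

open Classical in
lemma Jcount_succ (k : ℕ) :
    Jcount s x (k+1) = Jcount s x k +
      if ∃ j, 1 ≤ j ∧ eatenAt s x (k+1) = some (.inl j) then 1 else 0 := by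
  rw [Jcount, ← Finset.insert_Icc_right_eq_Icc_add_one (by omega), Finset.filter_insert]
  split_ifs
  · rw [Finset.card_insert_of_notMem (by simp)]; rfl
  · rfl

lemma Jcount_succ_of_eatenAt_ne {k : ℕ} (h : ∀ j, 1 ≤ j → eatenAt s x (k+1) ≠ some (.inl j)) :
    Jcount s x (k+1) = Jcount s x k := by
  rw [Jcount_succ, if_neg (by simpa using h), add_zero]

lemma Jcount_mono : Monotone (Jcount s x) := fun _ _ hkl => by
  classical
  exact Finset.card_le_card (Finset.filter_subset_filter _ (Finset.Icc_subset_Icc_right hkl))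

def typeCount (x : ℕ → Sym) (b : Bool) (P : List ℕ) : ℕ :=
  P.countP fun i => decide (x i = .pH) == b

lemma typeCount_cons (b : Bool) (i : ℕ) (P : List ℕ) :
    typeCount x b (i :: P) = typeCount x b P + if decide (x i = .pH) == b then 1 else 0 :=
  List.countP_cons

lemma typeCount_eq_eraseIdx (b : Bool) {P : List ℕ} {m : ℕ} (hm : m < P.length) :
    typeCount x b P =
      typeCount x b (P.eraseIdx m) + if decide (x P[m] = .pH) == b then 1 else 0 := by
  rw [typeCount, ← (List.getElem_cons_eraseIdx_perm hm).countP_eq, List.countP_cons]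
  rfl

lemma typeCount_false_add_true (P : List ℕ) :
    typeCount x false P + typeCount x true P = P.length := by
  induction P with
  | nil => rfl
  | cons i P ih =>
    rw [typeCount_cons, typeCount_cons, List.length_cons, ← ih]
    cases decide (x i = .pH) <;> simp <;> omega

/-- The state of the dynamics at a time `k` before the top burger `inl 0` of `s` is eaten:
the burgers `P` produced since time `0` and still present lie on top of `rest`, which is `inl 0`
followed by the burgers of `s` not yet eaten. -/
structure BeforeTop (s : ℕ → Bool) (x : ℕ → Sym) (k : ℕ) (P : List ℕ)
    (rest : ℕ → ℕ ⊕ ℕ) : Prop where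
  stack_eq : stackAt s x k = pushList rest P
  rest_zero : rest 0 = .inl 0
  rest_succ : ∀ m, ∃ j, rest (m+1) = .inl (j+1)
  walk : Uwalk s x k = ((typeCount x false P : ℤ), (typeCount x true P : ℤ) - Jcount s x k)

lemma beforeTop_zero : BeforeTop s x 0 [] fun j => .inl j :=
  ⟨rfl, rfl, fun m => ⟨m, rfl⟩, by simp [Uwalk, Jcount, typeCount]⟩

variable {k : ℕ} {P : List ℕ} {rest : ℕ → ℕ ⊕ ℕ}

lemma BeforeTop.eatenAt_succ_cases (hs : s 0 = false) (G : BeforeTop s x k P rest)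
    {e : ℕ ⊕ ℕ} (h : eatenAt s x (k+1) = some e) :
    (∃ m, ∃ hm : m < P.length, e = .inr P[m] ∧
        stackAt s x (k+1) = pushList rest (P.eraseIdx m)) ∨
      (e = .inl 0 ∧ Accepts (x (k+1)) false ∧
        (∀ i ∈ P, ¬ Accepts (x (k+1)) (decide (x i = .pH))) ∧
        stackAt s x (k+1) = pushList (del rest 0) P) ∨
      (∃ a, e = rest (a+1) ∧ symType s x e = true ∧ (∀ i ∈ P, x i ≠ .pH) ∧
        stackAt s x (k+1) = pushList (del rest (a+1)) P) := by
  obtain ⟨m, hme, hacc, hmin, hst⟩ := exists_of_eatenAt_succ_eq_some h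
  rw [G.stack_eq] at hme hmin hst
  rcases lt_or_ge m P.length with hm | hm
  · exact .inl ⟨m, hm, by rw [← hme, pushList_lt _ _ _ hm],
      by rw [hst, del_pushList_lt _ _ _ hm]⟩
  obtain ⟨a, rfl⟩ := Nat.exists_eq_add_of_le hm
  have habove : ∀ i ∈ P, ¬ Accepts (x (k+1)) (decide (x i = .pH)) := by
    intro i hi
    obtain ⟨m', hm', rfl⟩ := List.mem_iff_getElem.mp hi
    simpa [pushList_lt _ _ _ hm', symType] using hmin m' (by omega)
  rw [pushList_length_add] at hme
  rw [del_pushList_length_add] at hst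
  rcases a with _ | a
  · rw [G.rest_zero] at hme
    subst hme
    exact .inr (.inl ⟨rfl, by simpa [symType, hs] using hacc, habove, hst⟩)
  · have hnf : ¬ Accepts (x (k+1)) false := by
      have htop := pushList_length_add rest P 0
      rw [Nat.add_zero, G.rest_zero] at htop
      simpa [htop, symType, hs] using hmin P.length (by omega)
    -- the order passed over the top cheeseburger, so it is an `H`
    have htrue := hacc.eq_true_of_not_false hnf
    refine .inr (.inr ⟨a, hme.symm, htrue, fun i hi hH => habove i hi ?_, hst⟩)
    simpa [hH, htrue] using hacc

lemma BeforeTop.eat_below (G : BeforeTop s x k P rest) {a : ℕ}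
    (he : eatenAt s x (k+1) = some (rest (a+1))) (htype : symType s x (rest (a+1)) = true)
    (hst : stackAt s x (k+1) = pushList (del rest (a+1)) P) :
    BeforeTop s x (k+1) P (del rest (a+1)) := by
  obtain ⟨j, hj⟩ := G.rest_succ a
  have hJ : Jcount s x (k+1) = Jcount s x k + 1 := by
    rw [Jcount_succ, if_pos ⟨j+1, by omega, hj ▸ he⟩]
  refine ⟨hst, by simp [del, G.rest_zero], fun m => ?_, ?_⟩
  · unfold del
    split_ifs
    exacts [G.rest_succ m, G.rest_succ (m+1)]
  · rw [Uwalk_succ, G.walk, Uinc_of_eatenAt_eq_some he, htype, hJ]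
    simp [burgerUnit]
    ring

lemma BeforeTop.succ (hs : s 0 = false) (G : BeforeTop s x k P rest)
    (htop : eatenAt s x (k+1) ≠ some (.inl 0)) :
    ∃ P' rest', BeforeTop s x (k+1) P' rest' := by
  rcases he : eatenAt s x (k+1) with _ | e
  · have hJ : Jcount s x (k+1) = Jcount s x k := Jcount_succ_of_eatenAt_ne (by simp [he])
    rcases eatenAt_succ_eq_none he with ⟨hprod, hst⟩ | ⟨hH, hC, hst⟩
    · refine ⟨(k+1) :: P, rest, ⟨by rw [hst, G.stack_eq]; rfl, G.rest_zero, G.rest_succ, ?_⟩⟩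
      rw [Uwalk_succ, G.walk, Uinc_of_production hprod, hJ, typeCount_cons, typeCount_cons]
      cases decide (x (k+1) = .pH) <;> simp [burgerUnit, sub_add_eq_add_sub]
    · refine ⟨P, rest, ⟨by rw [hst, G.stack_eq], G.rest_zero, G.rest_succ, ?_⟩⟩
      rw [Uwalk_succ, G.walk, Uinc_of_eatenAt_eq_none hH hC he, hJ, add_zero]
  · rcases G.eatenAt_succ_cases hs he with ⟨m, hm, rfl, hst⟩ | ⟨rfl, -⟩ | ⟨a, rfl, htype, -, hst⟩
    · have hJ : Jcount s x (k+1) = Jcount s x k := Jcount_succ_of_eatenAt_ne (by simp [he])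
      refine ⟨P.eraseIdx m, rest, ⟨hst, G.rest_zero, G.rest_succ, ?_⟩⟩
      rw [Uwalk_succ, G.walk, Uinc_of_eatenAt_eq_some he, hJ, typeCount_eq_eraseIdx false hm,
        typeCount_eq_eraseIdx true hm]
      cases hb : decide (x P[m] = .pH) <;> simp [symType, hb, burgerUnit, sub_add_eq_add_sub]
    · exact absurd he htop
    · exact ⟨P, _, G.eat_below he htype hst⟩

lemma exists_beforeTop (hs : s 0 = false) {K : ℕ}
    (hK : ∀ t ≤ K, eatenAt s x t ≠ some (.inl 0)) : ∃ P rest, BeforeTop s x K P rest := by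
  induction K with
  | zero => exact ⟨[], _, beforeTop_zero⟩
  | succ K ih =>
    obtain ⟨P, rest, G⟩ := ih fun t ht => hK t (by omega)
    exact G.succ hs (hK (K+1) le_rfl)

lemma BeforeTop.eatenAt_succ_eq_top (hs : s 0 = false) (G : BeforeTop s x k P rest)
    (h : eatenAt s x (k+1) = some (.inl 0)) :
    Accepts (x (k+1)) false ∧ (∀ i ∈ P, ¬ Accepts (x (k+1)) (decide (x i = .pH))) ∧
      stackAt s x (k+1) = pushList (del rest 0) P := by
  rcases G.eatenAt_succ_cases hs h with ⟨m, hm, he, -⟩ | ⟨-, hP⟩ | ⟨a, he, -⟩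
  · cases he
  · exact hP
  · obtain ⟨j, hj⟩ := G.rest_succ a
    cases he.trans hj

lemma BeforeTop.walk_fst_succ_of_eat_top (hs : s 0 = false) (G : BeforeTop s x k P rest)
    (h : eatenAt s x (k+1) = some (.inl 0)) : (Uwalk s x (k+1)).1 = -1 := by
  obtain ⟨hacc, habove, -⟩ := G.eatenAt_succ_eq_top hs h
  have hcheese : typeCount x false P = 0 :=
    List.countP_eq_zero.mpr fun i hi hb =>
      habove i hi (by rwa [show decide (x i = .pH) = false by simpa using hb])
  simp [Uwalk_succ, G.walk, Uinc_of_eatenAt_eq_some h, hcheese, symType, hs, burgerUnit]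

lemma BeforeTop.eq_nil_of_eat_top_of_oF (hs : s 0 = false) (G : BeforeTop s x k P rest)
    (h : eatenAt s x (k+1) = some (.inl 0)) (hF : x (k+1) = .oF) : P = [] := by
  obtain ⟨-, habove, -⟩ := G.eatenAt_succ_eq_top hs h
  exact List.eq_nil_iff_forall_not_mem.mpr fun i hi => habove i hi (by simp [hF, Accepts])

lemma BeforeTop.stackAt_succ_ne_top_of_eat_top (hs : s 0 = false) (G : BeforeTop s x k P rest)
    (h : eatenAt s x (k+1) = some (.inl 0)) (m : ℕ) : stackAt s x (k+1) m ≠ .inl 0 := by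
  rw [(G.eatenAt_succ_eq_top hs h).2.2]
  rcases lt_or_ge m P.length with hm | hm
  · simp [pushList_lt _ _ _ hm]
  · obtain ⟨a, rfl⟩ := Nat.exists_eq_add_of_le hm
    obtain ⟨j, hj⟩ := G.rest_succ a
    simp [pushList_length_add, del, hj]

lemma BeforeTop.eat_oF_of_nil (G : BeforeTop s x k [] rest) (hF : x (k+1) = .oF) :
    eatenAt s x (k+1) = some (.inl 0) := by
  rw [eatenAt_succ_of_oF hF, G.stack_eq, pushList, G.rest_zero]

lemma BeforeTop.walk_snd_succ_of_eat_below (hs : s 0 = false) (G : BeforeTop s x k P rest)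
    {j : ℕ} (hj : 1 ≤ j) (h : eatenAt s x (k+1) = some (.inl j)) :
    (Uwalk s x (k+1)).2 = -Jcount s x (k+1) := by
  rcases G.eatenAt_succ_cases hs h with ⟨m, hm, he, -⟩ | ⟨he, -⟩ | ⟨a, he, htype, hnoH, hst⟩
  · cases he
  · cases he; omega
  · have hham : typeCount x true P = 0 :=
      List.countP_eq_zero.mpr fun i hi hb => hnoH i hi (by simpa using hb)
    rw [(G.eat_below (he ▸ h) (he ▸ htype) hst).walk, hham]
    simp

lemma Jcount_le_of_walk_snd_ge (hs : s 0 = false) {K n : ℕ}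
    (hK : ∀ t ≤ K, eatenAt s x t ≠ some (.inl 0))
    (hwalk : ∀ t, 1 ≤ t → t ≤ K → -(n : ℤ) ≤ (Uwalk s x t).2) : Jcount s x K ≤ n := by
  classical
  induction K with
  | zero => simp [Jcount]
  | succ K ih =>
    rw [Jcount_succ]
    split_ifs with hev
    · obtain ⟨j, hj, he⟩ := hev
      obtain ⟨P, rest, G⟩ := exists_beforeTop (K := K) hs fun t ht => hK t (by omega)
      have := hwalk (K+1) (by omega) le_rfl
      rw [G.walk_snd_succ_of_eat_below hs hj he, Jcount_succ, if_pos ⟨j, hj, he⟩] at this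
      omega
    · exact ih (fun t ht => hK t (by omega)) fun t h1 h2 => hwalk t h1 (by omega)

lemma eatenAt_ne_top_of_walk_fst_nonneg (hs : s 0 = false) {K : ℕ}
    (hwalk : ∀ t, 1 ≤ t → t ≤ K → 0 ≤ (Uwalk s x t).1) :
    ∀ t ≤ K, eatenAt s x t ≠ some (.inl 0) := by
  induction K with
  | zero => intro t ht; simp [show t = 0 by omega, eatenAt]
  | succ K ih =>
    have hK := ih fun t h1 h2 => hwalk t h1 (by omega)
    intro t ht htop
    rcases Nat.lt_or_ge t (K+1) with hlt | hge
    · exact hK t (by omega) htop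
    obtain rfl : t = K + 1 := by omega
    obtain ⟨P, rest, G⟩ := exists_beforeTop hs hK
    have := hwalk (K+1) (by omega) le_rfl
    rw [G.walk_fst_succ_of_eat_top hs htop] at this
    omega

lemma eq_of_eatenAt_top (hs : s 0 = false) {t₀ t : ℕ}
    (hfirst : ∀ t' < t₀, eatenAt s x t' ≠ some (.inl 0))
    (h₀ : eatenAt s x t₀ = some (.inl 0)) (h : eatenAt s x t = some (.inl 0)) : t = t₀ := by
  obtain ⟨k, rfl⟩ : ∃ k, t₀ = k + 1 := Nat.exists_eq_succ_of_ne_zero (by rintro rfl; cases h₀)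
  by_contra hne
  rcases Nat.lt_or_ge t (k+1) with hlt | hge
  · exact hfirst t hlt h
  obtain ⟨t', rfl⟩ : ∃ t', t = t' + 1 := ⟨t - 1, by omega⟩
  obtain ⟨P, rest, G⟩ := exists_beforeTop (K := k) hs fun t'' ht'' => hfirst t'' (by omega)
  obtain ⟨m, hm, -⟩ := exists_of_eatenAt_succ_eq_some h
  exact stackAt_ne_inl_of_le (by omega) (G.stackAt_succ_ne_top_of_eat_top hs h₀) m hm

end Regime

section Events

variable {p : ℝ} {s : ℕ → Bool} {x : ℕ → Sym} {k n : ℕ}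

lemma hitT_eq (hfirst : ∀ t < k, eatenAt s x t ≠ some (.inl 0))
    (h : eatenAt s x k = some (.inl 0)) : hitT s x = k := by
  rw [hitT, dif_pos ⟨k, h⟩, (Nat.find_eq_iff _).mpr ⟨h, hfirst⟩]

lemma JT_eq (hfirst : ∀ t < k, eatenAt s x t ≠ some (.inl 0))
    (h : eatenAt s x k = some (.inl 0)) : JT s x = Jcount s x k := by
  rw [JT, dif_pos ⟨k, h⟩, (Nat.find_eq_iff _).mpr ⟨h, hfirst⟩, Jcount]

lemma TstarN_eq (hk : 1 ≤ k) (hexit : Vwalk p s x k ∉ coneCn p n)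
    (hin : ∀ j, 1 ≤ j → j < k → Vwalk p s x j ∈ coneCn p n) : TstarN p s x n = k := by
  classical
  rw [TstarN, dif_pos ⟨k, hk, hexit⟩,
    (Nat.find_eq_iff _).mpr ⟨⟨hk, hexit⟩, fun j hj ⟨h1, h2⟩ => h2 (hin j h1 hj)⟩]

lemma exit_at_tip_of_eat_top_of_oF (hp : p ∈ Set.Ioo (0:ℝ) (1/2)) (hs : s 0 = false)
    (hfirst : ∀ t < k, eatenAt s x t ≠ some (.inl 0)) (h : eatenAt s x k = some (.inl 0))
    (hF : x k = .oF) (hJ : Jcount s x k = n) :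
    1 ≤ k ∧ Vwalk p s x k ∉ coneCn p n ∧ (∀ j, 1 ≤ j → j < k → Vwalk p s x j ∈ coneCn p n) ∧
      Vwalk p s x (k-1) = -((n : ℂ) * vZero p) := by
  obtain ⟨K, rfl⟩ : ∃ K, k = K + 1 := Nat.exists_eq_succ_of_ne_zero (by rintro rfl; cases h)
  obtain ⟨P, rest, G⟩ := exists_beforeTop (K := K) hs fun t ht => hfirst t (by omega)
  obtain rfl := G.eq_nil_of_eat_top_of_oF hs h hF
  have hJK : Jcount s x (K+1) = Jcount s x K :=
    Jcount_succ_of_eatenAt_ne fun j hj he => by rw [h] at he; cases he; omega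
  have hUK : Uwalk s x K = (0, -(n : ℤ)) := by simp [G.walk, typeCount, ← hJ, hJK]
  refine ⟨by omega, ?_, fun t h1 h2 => ?_, (Vwalk_eq_neg_tip_iff hp n K).mpr hUK⟩
  · simp [Vwalk_mem_coneCn_iff hp, Uwalk_succ, hUK, Uinc_of_eatenAt_eq_some h, symType, hs,
      burgerUnit]
  · obtain ⟨Q, r, G'⟩ := exists_beforeTop (K := t) hs fun t' ht' => hfirst t' (by omega)
    have hJt := Jcount_mono (s := s) (x := x) (show t ≤ K + 1 by omega)
    rw [Vwalk_mem_coneCn_iff hp, G'.walk]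
    simp only
    omega

lemma eat_top_of_exit_at_tip (hp : p ∈ Set.Ioo (0:ℝ) (1/2)) (hs : s 0 = false) (hk : 1 ≤ k)
    (hin : ∀ j, 1 ≤ j → j < k → Vwalk p s x j ∈ coneCn p n)
    (htip : Vwalk p s x (k-1) = -((n : ℂ) * vZero p)) (hF : x k = .oF) :
    (∀ t < k, eatenAt s x t ≠ some (.inl 0)) ∧ eatenAt s x k = some (.inl 0) ∧
      Jcount s x k = n := by
  obtain ⟨K, rfl⟩ : ∃ K, k = K + 1 := ⟨k - 1, by omega⟩
  have hcone t (h1 : 1 ≤ t) (h2 : t ≤ K) := (Vwalk_mem_coneCn_iff hp n t).mp (hin t h1 (by omega))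
  have hK := eatenAt_ne_top_of_walk_fst_nonneg hs fun t h1 h2 => (hcone t h1 h2).1
  have hJle := Jcount_le_of_walk_snd_ge hs hK fun t h1 h2 => (hcone t h1 h2).2
  obtain ⟨P, rest, G⟩ := exists_beforeTop hs hK
  have hUK := (Vwalk_eq_neg_tip_iff hp n K).mp htip
  rw [G.walk, Prod.mk.injEq] at hUK
  have hlen := typeCount_false_add_true (x := x) P
  obtain rfl : P = [] := List.eq_nil_of_length_eq_zero (by omega)
  have htop := G.eat_oF_of_nil hF
  refine ⟨fun t ht => hK t (by omega), htop, ?_⟩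
  rw [Jcount_succ_of_eatenAt_ne fun j hj he => by rw [htop] at he; cases he; omega]
  simp [typeCount] at hUK
  omega

end Events

end FKPaper

open FKPaper in
theorem fk_same_event_general (p : ℝ) (hp : p ∈ Set.Ioo (0:ℝ) (1/2))
    (s : ℕ → Bool) (n m : ℕ) (x : ℕ → Sym) :
    (s 0 = false ∧ (((m^2 : ℕ) : ℕ∞) < hitT s x ∧ JT s x = n) ∧ Eev s x)
      ↔ (EstarN p s x n ∧ ((m^2 : ℕ) : ℕ∞) < TstarN p s x n) := by
  constructor
  · rintro ⟨hs, ⟨hT, hJ⟩, k, hk, hF⟩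
    have hex : ∃ t, eatenAt s x t = some (.inl 0) := ⟨k, hk⟩
    have hfirst : ∀ t < Nat.find hex, eatenAt s x t ≠ some (.inl 0) := fun t => Nat.find_min hex
    obtain rfl := eq_of_eatenAt_top hs hfirst (Nat.find_spec hex) hk
    rw [hitT_eq hfirst hk] at hT
    rw [JT_eq hfirst hk] at hJ
    obtain ⟨hk1, hexit, hin, htip⟩ := exit_at_tip_of_eat_top_of_oF hp hs hfirst hk hF hJ
    exact ⟨⟨hs, _, hk1, hexit, hin, htip, hF⟩, by rwa [TstarN_eq hk1 hexit hin]⟩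
  · rintro ⟨⟨hs, k, hk1, hexit, hin, htip, hF⟩, hT⟩
    rw [TstarN_eq hk1 hexit hin] at hT
    obtain ⟨hfirst, htop, hJ⟩ := eat_top_of_exit_at_tip hp hs hk1 hin htip hF
    exact ⟨hs, ⟨by rwa [hitT_eq hfirst htop], by rw [JT_eq hfirst htop, hJ]⟩, k, htop, hF⟩

open FKPaper in
/-- Lemma `prop:same_event`: for every infinite burger stack `s`, all
integers `n, m ≥ 1` and every realisation of the symbol sequence, the events
`{top burger of s is a cheeseburger} ∩ {T > m², |J_T| = n} ∩ E` and
`E*_n ∩ {T*_{θ0,n} > m²}` coincide. -/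
theorem fk_same_event (p : ℝ) (hp : p ∈ Set.Ioo (0:ℝ) (1/2))
    (s : ℕ → Bool) (n m : ℕ) (hn : 1 ≤ n) (hm : 1 ≤ m) (x : ℕ → Sym) :
    (s 0 = false ∧ (((m^2 : ℕ) : ℕ∞) < hitT s x ∧ JT s x = n) ∧ Eev s x)
      ↔ (EstarN p s x n ∧ ((m^2 : ℕ) : ℕ∞) < TstarN p s x n) :=
  fk_same_event_general p hp s n m x
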